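/- arXiv:1804.08432 — 2 statements merged into one kernel-verified Lean document; each statement's English description precedes it below -/
import Mathlib

section
/- Let λ > 0, T > 0 and let τ₁, …, τₙ be i.i.d. real random variables with exponential density ρ_λ(x) = λ e^{−λx} on (0,∞), and set Sₙ = τ₁ + ⋯ + τₙ. Then E[ 1_{Sₙ < T} · ∏_{j=1}^{n} 1/ρ_λ(τⱼ)² ] ≤ e^{λT} Tⁿ / (λⁿ n!). -/
/-!
Integrating out the first coordinate gives the renewal-type recursion
`I_{n+1}(T) = ∫ w(t) I_n(T - t) dμ(t)` for `I_n(T) = ∫ 1_{Sₙ < T} ∏ⱼ w(τⱼ) dμ⊗ⁿ`.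
For the exponential law, density times weight is `ρ_λ(t)⁻¹ = e^{λt}/λ`, and
`e^{λt} e^{λ(T-t)} = e^{λT}`, so the bound `e^{λT} Tⁿ / (λⁿ n!)` propagates with the factor
`∫₀ᵀ (T - t)ⁿ dt = T^{n+1}/(n+1)`.
-/

open MeasureTheory

/-- The measure on `ℝ` with exponential density `ρ_λ(x) = λ e^{-λ x}` on `(0, ∞)`. -/
noncomputable def expMeasure' (l : ℝ) : Measure ℝ :=
  volume.withDensity fun x => ENNReal.ofReal (if 0 < x then l * Real.exp (-l * x) else 0)

open Set
open scoped ENNReal Nat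

noncomputable def truncProdLIntegral (μ : Measure ℝ) (w : ℝ → ℝ≥0∞) (n : ℕ) (T : ℝ) : ℝ≥0∞ :=
  ∫⁻ τ : Fin n → ℝ, {τ | ∑ j, τ j < T}.indicator (fun τ => ∏ j, w (τ j)) τ
    ∂Measure.pi fun _ => μ

lemma truncProdLIntegral_zero (μ : Measure ℝ) (w : ℝ → ℝ≥0∞) (T : ℝ) :
    truncProdLIntegral μ w 0 T = (Ioi 0).indicator 1 T := by
  simp [truncProdLIntegral, indicator]

lemma truncProdLIntegral_succ (μ : Measure ℝ) [SigmaFinite μ] {w : ℝ → ℝ≥0∞}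
    (hw : Measurable w) (n : ℕ) (T : ℝ) :
    truncProdLIntegral μ w (n + 1) T = ∫⁻ t, w t * truncProdLIntegral μ w n (T - t) ∂μ := by
  have hmeas : ∀ (m : ℕ) (S : ℝ), Measurable fun τ : Fin m → ℝ =>
      {τ | ∑ j, τ j < S}.indicator (fun τ => ∏ j, w (τ j)) τ := fun m S =>
    (Finset.measurable_prod _ fun j _ => hw.comp (measurable_pi_apply j)).indicator
      (measurableSet_lt (by fun_prop) measurable_const)
  have e := (measurePreserving_piFinSuccAbove (fun _ : Fin (n + 1) => μ) 0).symm
  rw [truncProdLIntegral, ← e.lintegral_comp_emb (MeasurableEquiv.measurableEmbedding _),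
    lintegral_prod _ (by exact ((hmeas _ T).comp e.measurable).aemeasurable)]
  refine lintegral_congr fun t => ?_
  rw [truncProdLIntegral, ← lintegral_const_mul _ (hmeas n (T - t))]
  refine lintegral_congr fun τ => ?_
  simp only [MeasurableEquiv.piFinSuccAbove_symm_apply, Fin.insertNthEquiv_zero,
    Fin.consEquiv_apply, Fin.sum_univ_succ, Fin.prod_univ_succ, Fin.cons_zero, Fin.cons_succ,
    indicator, mem_ofPred_eq, lt_sub_iff_add_lt']
  split_ifs <;> simp

instance (l : ℝ) : SigmaFinite (expMeasure' l) := by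
  unfold expMeasure'
  infer_instance

lemma lintegral_expMeasure' (l : ℝ) (f : ℝ → ℝ≥0∞) :
    ∫⁻ t, f t ∂expMeasure' l = ∫⁻ t in Ioi 0, ENNReal.ofReal (l * Real.exp (-l * t)) * f t := by
  rw [expMeasure', lintegral_withDensity_eq_lintegral_mul_non_measurable _
    ((Measurable.ite measurableSet_Ioi (by fun_prop) measurable_const).ennreal_ofReal)
    (ae_of_all _ fun _ => ENNReal.ofReal_lt_top), ← lintegral_indicator measurableSet_Ioi]
  congr with t
  by_cases ht : 0 < t <;> simp [indicator, ht]

lemma setLIntegral_Ioo_sub_pow {T : ℝ} (hT : 0 ≤ T) (n : ℕ) :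
    ∫⁻ t in Ioo 0 T, ENNReal.ofReal ((T - t) ^ n) = ENNReal.ofReal (T ^ (n + 1) / (n + 1)) := by
  rw [← ofReal_integral_eq_lintegral_ofReal, ← integral_Ioc_eq_integral_Ioo,
    ← intervalIntegral.integral_of_le hT,
    intervalIntegral.integral_comp_sub_left (fun s => s ^ n) T]
  · simp [integral_pow]
  · exact ((continuous_const.sub continuous_id).pow n).integrableOn_Icc.mono_set
      Ioo_subset_Icc_self
  · filter_upwards [ae_restrict_mem measurableSet_Ioo] with t ht
    exact pow_nonneg (sub_nonneg.2 ht.2.le) n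

/- Defined for every `T`, vanishing for `T ≤ 0`, so that an induction hypothesis in terms of it
applies at `T - t` for all `t`. -/
noncomputable def expTruncBound (l : ℝ) (n : ℕ) : ℝ → ℝ≥0∞ :=
  (Ioi 0).indicator fun T => ENNReal.ofReal (Real.exp (l * T) * T ^ n / (l ^ n * n !))

lemma expDensity_mul_weight_mul_expTruncBound {l : ℝ} (hl : 0 < l) (n : ℕ) (T t : ℝ) :
    ENNReal.ofReal (l * Real.exp (-l * t)) *
        (ENNReal.ofReal ((l * Real.exp (-l * t)) ^ 2)⁻¹ * expTruncBound l n (T - t))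
      = (Iio T).indicator (fun t => ENNReal.ofReal (Real.exp (l * T) / (l ^ (n + 1) * n !)) *
          ENNReal.ofReal ((T - t) ^ n)) t := by
  by_cases htT : t < T
  · have hTt : 0 < T - t := sub_pos.2 htT
    simp only [expTruncBound, indicator, mem_Ioi, mem_Iio, hTt, htT, if_true]
    rw [← ENNReal.ofReal_mul (by positivity), ← ENNReal.ofReal_mul (by positivity),
      ← ENNReal.ofReal_mul (by positivity)]
    congr 1
    have hexp : Real.exp (l * T) = Real.exp (l * t) * Real.exp (l * (T - t)) := by
      rw [← Real.exp_add]; ring_nf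
    simp only [hexp, neg_mul, Real.exp_neg]
    field_simp
    ring
  · simp [expTruncBound, indicator, htT, sub_pos]

theorem truncProdLIntegral_expMeasure'_le {l : ℝ} (hl : 0 < l) (n : ℕ) (T : ℝ) :
    truncProdLIntegral (expMeasure' l) (fun t => ENNReal.ofReal ((l * Real.exp (-l * t)) ^ 2)⁻¹)
      n T ≤ expTruncBound l n T := by
  induction n generalizing T with
  | zero =>
    rw [truncProdLIntegral_zero, expTruncBound]
    refine indicator_le_indicator' fun (hT : 0 < T) => ?_
    simpa using Real.one_le_exp (by positivity)
  | succ n ih =>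
    set c := Real.exp (l * T) / (l ^ (n + 1) * n !)
    calc truncProdLIntegral (expMeasure' l) _ (n + 1) T
        ≤ ∫⁻ t, ENNReal.ofReal ((l * Real.exp (-l * t)) ^ 2)⁻¹ * expTruncBound l n (T - t)
            ∂expMeasure' l := by
          rw [truncProdLIntegral_succ _ (by fun_prop)]
          exact lintegral_mono fun t => by gcongr; exact ih _
      _ = ∫⁻ t in Ioi 0, (Iio T).indicator
            (fun t => ENNReal.ofReal c * ENNReal.ofReal ((T - t) ^ n)) t := by
          rw [lintegral_expMeasure']
          exact lintegral_congr (expDensity_mul_weight_mul_expTruncBound hl n T)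
      _ = ENNReal.ofReal c * ∫⁻ t in Ioo 0 T, ENNReal.ofReal ((T - t) ^ n) := by
          rw [lintegral_indicator measurableSet_Iio, Measure.restrict_restrict measurableSet_Iio,
            Iio_inter_Ioi, lintegral_const_mul _ (by fun_prop)]
      _ ≤ expTruncBound l (n + 1) T := by
          rcases le_or_gt T 0 with hT | hT
          · simp [Ioo_eq_empty_of_le hT]
          · rw [setLIntegral_Ioo_sub_pow hT.le, ← ENNReal.ofReal_mul (by positivity),
              expTruncBound, indicator_of_mem (show T ∈ Ioi 0 from hT)]
            refine le_of_eq (congrArg ENNReal.ofReal ?_)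
            simp only [c, Nat.factorial_succ]
            push_cast
            field_simp

/-- For i.i.d. exponential(λ) random variables `τ₁, …, τₙ` with sum `Sₙ`,
`E[1_{Sₙ < T} ∏ⱼ 1/ρ_λ(τⱼ)²] ≤ e^{λT} Tⁿ / (λⁿ n!)`. -/
theorem stmt_1 (n : ℕ) (l T : ℝ) (hl : 0 < l) (hT : 0 < T) :
    ∫ τ : Fin n → ℝ,
      (if (∑ j, τ j) < T then ∏ j, ((l * Real.exp (-l * τ j)) ^ 2)⁻¹ else 0)
      ∂(Measure.pi fun _ => expMeasure' l)
    ≤ Real.exp (l * T) * T ^ n / (l ^ n * (n.factorial : ℝ)) := by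
  have hlint := truncProdLIntegral_expMeasure'_le hl n T
  rw [expTruncBound, indicator_of_mem (show T ∈ Ioi 0 from hT), truncProdLIntegral] at hlint
  have hnonneg : ∀ τ : Fin n → ℝ,
      0 ≤ (if (∑ j, τ j) < T then ∏ j, ((l * Real.exp (-l * τ j)) ^ 2)⁻¹ else 0) := fun τ => by
    split_ifs
    exacts [Finset.prod_nonneg fun j _ => by positivity, le_rfl]
  rw [integral_eq_lintegral_of_nonneg_ae (ae_of_all _ hnonneg)
    (Measurable.ite (measurableSet_lt (by fun_prop) measurable_const) (by fun_prop)
      measurable_const).aestronglyMeasurable]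
  refine ENNReal.toReal_le_of_le_ofReal (by positivity)
    (le_of_eq_of_le (lintegral_congr fun τ => ?_) hlint)
  simp only [indicator, mem_ofPred_eq]
  split_ifs
  exacts [ENNReal.ofReal_prod_of_nonneg fun j _ => by positivity, ENNReal.ofReal_zero]
end

section
/- Let λ > 0, T > 0 and 0 < u < 1, and let τ₁, …, τ_p be i.i.d. real random variables on (0,∞) with Gamma density ρ(x) = λᵘ x^{u−1} e^{−λx} / Γ(u), and set S_p = τ₁ + ⋯ + τ_p. Then E[ 1_{S_p < T} · (1/ρ(τ₁)²) · ∏_{j=2}^{p} 1/(ρ(τⱼ)² τⱼ) ] ≤ (Γ(u)/λᵘ)ᵖ e^{λT} · T^{(1−u)p+1} / ( (2−u)(1−u)^{p−1} ). -/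
/-!
For `x > 0` one has `1 / ρ(x) = (Γ(u)/λᵘ) x^{1-u} e^{λx}`, so each factor of the integrand equals
`(Γ(u)/λᵘ) e^{λτⱼ} τⱼ^{aⱼ} / ρ(τⱼ)` with `a₁ = 1 - u` and `aⱼ = -u` for `j ≥ 2`. On `{S_p < T}`
either some `τⱼ ≤ 0`, where `ρ(τⱼ) = 0` kills the integrand, or every `τⱼ` lies in `(0, T)`, and
`∏ e^{λτⱼ} = e^{λS_p} ≤ e^{λT}`. What remains is a product of functions of one coordinate each, and
the `1 / ρ(τⱼ)` cancels against the density, so the integral factorises into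
`∫₀ᵀ x^{aⱼ} dx = T^{aⱼ+1} / (aⱼ+1)`, finite because `aⱼ > -1`.
-/

open MeasureTheory

/-- The Gamma density with shape `u` and rate `λ`: `ρ(x) = λᵘ x^{u-1} e^{-λx} / Γ(u)` on
`(0, ∞)`. -/
noncomputable def gammaPdf (l u x : ℝ) : ℝ :=
  if 0 < x then l ^ u * x ^ (u - 1) * Real.exp (-l * x) / Real.Gamma u else 0

/-- The measure on `ℝ` with Gamma(u, λ) density. -/
noncomputable def gammaMeasure' (l u : ℝ) : Measure ℝ :=
  volume.withDensity fun x => ENNReal.ofReal (gammaPdf l u x)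

open Real Set Finset

lemma prod_comp_update_const {ι M α : Type*} [Fintype ι] [DecidableEq ι] [CommMonoid M]
    (f : α → M) (i₀ : ι) (a c : α) :
    ∏ j, f (Function.update (fun _ => c) i₀ a j) = f a * f c ^ (Fintype.card ι - 1) := by
  rw [← mul_prod_erase Finset.univ _ (mem_univ i₀), Function.update_self,
    prod_congr rfl fun j hj => by rw [Function.update_of_ne (ne_of_mem_erase hj)], prod_const,
    card_erase_of_mem (mem_univ i₀), card_univ]

section WithDensity

variable {α : Type*} {ρ g : α → ℝ} {s : Set α}

lemma toNNReal_smul_indicator_div (hρ : ∀ x ∈ s, 0 < ρ x) :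
    (fun x => (ρ x).toNNReal • s.indicator (fun x => g x / ρ x) x) = s.indicator g := by
  funext x
  by_cases hx : x ∈ s
  · simp [hx, NNReal.smul_def, (hρ x hx).le, mul_div_cancel₀ _ (hρ x hx).ne']
  · simp [hx]

variable [MeasurableSpace α] {μ : Measure α}

lemma integrable_withDensity_indicator_div_iff (hρm : Measurable ρ) (hs : MeasurableSet s)
    (hρ : ∀ x ∈ s, 0 < ρ x) :
    Integrable (s.indicator fun x => g x / ρ x) (μ.withDensity fun x => ENNReal.ofReal (ρ x)) ↔
      IntegrableOn g s μ := by
  refine (integrable_withDensity_iff_integrable_smul hρm.real_toNNReal).trans ?_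
  rw [toNNReal_smul_indicator_div hρ, integrable_indicator_iff hs]

lemma integral_withDensity_indicator_div (hρm : Measurable ρ) (hs : MeasurableSet s)
    (hρ : ∀ x ∈ s, 0 < ρ x) :
    ∫ x, s.indicator (fun x => g x / ρ x) x ∂(μ.withDensity fun x => ENNReal.ofReal (ρ x)) =
      ∫ x in s, g x ∂μ := by
  refine (integral_withDensity_eq_integral_smul hρm.real_toNNReal _).trans ?_
  rw [toNNReal_smul_indicator_div hρ, integral_indicator hs]

end WithDensity

section GammaDensity

lemma measurable_gammaPdf (l u : ℝ) : Measurable (gammaPdf l u) :=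
  Measurable.ite measurableSet_Ioi (by fun_prop) measurable_const

instance (l u : ℝ) : SigmaFinite (gammaMeasure' l u) :=
  SigmaFinite.withDensity_ofReal _

variable {l u x : ℝ}

lemma gammaPdf_of_nonpos (hx : x ≤ 0) : gammaPdf l u x = 0 :=
  if_neg hx.not_gt

lemma gammaPdf_pos (hl : 0 < l) (hu : 0 < u) (hx : 0 < x) : 0 < gammaPdf l u x := by
  have := Gamma_pos_of_pos hu
  rw [gammaPdf, if_pos hx]
  positivity

lemma inv_gammaPdf (hx : 0 < x) :
    (gammaPdf l u x)⁻¹ = Gamma u / l ^ u * x ^ (1 - u) * exp (l * x) := by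
  rw [gammaPdf, if_pos hx, inv_div, show 1 - u = -(u - 1) by ring, rpow_neg hx.le,
    show l * x = -(-l * x) by ring, exp_neg]
  ring

lemma inv_gammaPdf_sq_mul_rpow (hx : 0 < x) (b : ℝ) :
    (gammaPdf l u x ^ 2)⁻¹ * x ^ b =
      Gamma u / l ^ u * exp (l * x) * (x ^ (1 - u + b) / gammaPdf l u x) := by
  rw [sq, mul_inv, rpow_add hx]
  nth_rw 1 [inv_gammaPdf hx]
  ring

lemma inv_gammaPdf_sq_mul_rpow_nonneg (hl : 0 < l) (hu : 0 < u) (b : ℝ) :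
    0 ≤ (gammaPdf l u x ^ 2)⁻¹ * x ^ b := by
  rcases le_or_gt x 0 with hx | hx
  · simp [gammaPdf_of_nonpos hx]
  · have := gammaPdf_pos hl hu hx
    positivity

end GammaDensity

section GammaMoments

variable {l u T : ℝ}

lemma integrable_gammaMeasure'_indicator_rpow_div (hl : 0 < l) (hu : 0 < u) (hT : 0 < T)
    {a : ℝ} (ha : -1 < a) :
    Integrable ((Ioo 0 T).indicator fun x => x ^ a / gammaPdf l u x) (gammaMeasure' l u) :=
  (integrable_withDensity_indicator_div_iff (measurable_gammaPdf l u) measurableSet_Ioo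
    fun _ hx => gammaPdf_pos hl hu hx.1).2 ((intervalIntegral.integrableOn_Ioo_rpow_iff hT).2 ha)

lemma integral_gammaMeasure'_indicator_rpow_div (hl : 0 < l) (hu : 0 < u) (hT : 0 < T)
    {a : ℝ} (ha : -1 < a) :
    ∫ x, (Ioo 0 T).indicator (fun x => x ^ a / gammaPdf l u x) x ∂gammaMeasure' l u =
      T ^ (a + 1) / (a + 1) := by
  rw [gammaMeasure', integral_withDensity_indicator_div (measurable_gammaPdf l u)
      measurableSet_Ioo fun _ hx => gammaPdf_pos hl hu hx.1,
    ← integral_Ioc_eq_integral_Ioo, ← intervalIntegral.integral_of_le hT.le,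
    integral_rpow (Or.inl ha), zero_rpow (by linarith), sub_zero]

variable {ι : Type*} [Fintype ι]

lemma ite_sum_lt_prod_inv_gammaPdf_sq_le (hl : 0 < l) (hu : 0 < u) (b τ : ι → ℝ) :
    (if ∑ j, τ j < T then ∏ j, (gammaPdf l u (τ j) ^ 2)⁻¹ * τ j ^ b j else 0) ≤
      (Gamma u / l ^ u) ^ Fintype.card ι * exp (l * T) *
        ∏ j, (Ioo 0 T).indicator (fun x => x ^ (1 - u + b j) / gammaPdf l u x) (τ j) := by
  have hw : ∀ j, 0 ≤ (Ioo 0 T).indicator (fun x => x ^ (1 - u + b j) / gammaPdf l u x) (τ j) :=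
    fun j => indicator_nonneg (fun x hx => by
      have := hx.1
      have := gammaPdf_pos hl hu hx.1
      positivity) _
  have hrhs : 0 ≤ (Gamma u / l ^ u) ^ Fintype.card ι * exp (l * T) *
      ∏ j, (Ioo 0 T).indicator (fun x => x ^ (1 - u + b j) / gammaPdf l u x) (τ j) := by
    have := Gamma_pos_of_pos hu
    have := prod_nonneg fun j (_ : j ∈ Finset.univ) => hw j
    positivity
  split_ifs with hs
  · by_cases hpos : ∀ j, 0 < τ j
    · have hlt : ∀ j, τ j < T := fun j =>
        (single_le_sum (fun i _ => (hpos i).le) (mem_univ j)).trans_lt hs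
      calc ∏ j, (gammaPdf l u (τ j) ^ 2)⁻¹ * τ j ^ b j
          = ∏ j, Gamma u / l ^ u * exp (l * τ j) *
              (Ioo 0 T).indicator (fun x => x ^ (1 - u + b j) / gammaPdf l u x) (τ j) :=
            prod_congr rfl fun j _ => by
              rw [indicator_of_mem (show τ j ∈ Ioo 0 T from ⟨hpos j, hlt j⟩),
                inv_gammaPdf_sq_mul_rpow (hpos j)]
        _ = (Gamma u / l ^ u) ^ Fintype.card ι * exp (l * ∑ j, τ j) *
              ∏ j, (Ioo 0 T).indicator (fun x => x ^ (1 - u + b j) / gammaPdf l u x) (τ j) := by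
            rw [prod_mul_distrib, prod_mul_distrib, prod_const, card_univ, mul_sum, exp_sum]
        _ ≤ _ := by
            have := Gamma_pos_of_pos hu
            gcongr
            exact prod_nonneg fun j _ => hw j
    · obtain ⟨j, hj⟩ := not_forall.1 hpos
      rw [prod_eq_zero (mem_univ j) (by simp [gammaPdf_of_nonpos (not_lt.1 hj)])]
      exact hrhs
  · exact hrhs

lemma inv_gammaPdf_sq_mul_prod_erase [DecidableEq ι] (i₀ : ι) (τ : ι → ℝ) :
    (gammaPdf l u (τ i₀) ^ 2)⁻¹ * ∏ j ∈ Finset.univ.erase i₀, (gammaPdf l u (τ j) ^ 2 * τ j)⁻¹ =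
      ∏ j, (gammaPdf l u (τ j) ^ 2)⁻¹ * τ j ^ Function.update (fun _ => (-1 : ℝ)) i₀ 0 j := by
  rw [← mul_prod_erase Finset.univ _ (mem_univ i₀), Function.update_self, rpow_zero, mul_one]
  refine congrArg _ (prod_congr rfl fun j hj => ?_)
  rw [Function.update_of_ne (ne_of_mem_erase hj), rpow_neg_one, mul_inv]

theorem integral_ite_sum_lt_prod_inv_gammaPdf_sq_le (hl : 0 < l) (hu : 0 < u) (hT : 0 < T)
    (b : ι → ℝ) (hb : ∀ j, u - 2 < b j) :
    ∫ τ : ι → ℝ, (if ∑ j, τ j < T then ∏ j, (gammaPdf l u (τ j) ^ 2)⁻¹ * τ j ^ b j else 0)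
        ∂(Measure.pi fun _ => gammaMeasure' l u) ≤
      (Gamma u / l ^ u) ^ Fintype.card ι * exp (l * T) *
        ∏ j, T ^ (2 - u + b j) / (2 - u + b j) := by
  have ha : ∀ j, -1 < 1 - u + b j := fun j => by linarith [hb j]
  calc _ ≤ ∫ τ : ι → ℝ, (Gamma u / l ^ u) ^ Fintype.card ι * exp (l * T) *
          ∏ j, (Ioo 0 T).indicator (fun x => x ^ (1 - u + b j) / gammaPdf l u x) (τ j)
          ∂(Measure.pi fun _ => gammaMeasure' l u) := by
        refine integral_mono_of_nonneg (ae_of_all _ fun τ => show (0 : ℝ) ≤ _ from ?_)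
          ((Integrable.fintype_prod fun j =>
            integrable_gammaMeasure'_indicator_rpow_div hl hu hT (ha j)).const_mul _)
          (ae_of_all _ (ite_sum_lt_prod_inv_gammaPdf_sq_le hl hu b))
        dsimp only
        split_ifs
        exacts [prod_nonneg fun j _ => inv_gammaPdf_sq_mul_rpow_nonneg hl hu _, le_rfl]
    _ = _ := by
        rw [integral_const_mul, integral_fintype_prod_eq_prod]
        congr 1
        refine prod_congr rfl fun j _ => ?_
        rw [integral_gammaMeasure'_indicator_rpow_div hl hu hT (ha j)]
        ring_nf

end GammaMoments

/-- For i.i.d. Gamma(u, λ) random variables `τ₁, …, τ_p` (with `0 < u < 1`) and `S_p` their sum,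
`E[1_{S_p < T} · ρ(τ₁)⁻² · ∏_{j=2}^p (ρ(τⱼ)² τⱼ)⁻¹]
  ≤ (Γ(u)/λᵘ)ᵖ e^{λT} T^{(1-u)p+1} / ((2-u)(1-u)^{p-1})`. -/
theorem stmt_5 (p : ℕ) (hp : 1 ≤ p) (l u T : ℝ) (hl : 0 < l) (hu0 : 0 < u) (hu1 : u < 1)
    (hT : 0 < T) :
    ∫ τ : Fin p → ℝ,
      (if (∑ j, τ j) < T then
        ((gammaPdf l u (τ ⟨0, hp⟩)) ^ 2)⁻¹ *
          ∏ j ∈ Finset.univ.erase (⟨0, hp⟩ : Fin p), ((gammaPdf l u (τ j)) ^ 2 * τ j)⁻¹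
       else 0)
      ∂(Measure.pi fun _ => gammaMeasure' l u)
    ≤ (Real.Gamma u / l ^ u) ^ p * Real.exp (l * T) * T ^ ((1 - u) * (p : ℝ) + 1)
        / ((2 - u) * (1 - u) ^ (p - 1)) := by
  have hpow : T ^ ((1 - u) * (p : ℝ) + 1) = T ^ (2 - u) * (T ^ (1 - u)) ^ (p - 1) := by
    rw [← rpow_natCast, ← rpow_mul hT.le, ← rpow_add hT, Nat.cast_sub hp]
    ring_nf
  simp only [inv_gammaPdf_sq_mul_prod_erase]
  refine (integral_ite_sum_lt_prod_inv_gammaPdf_sq_le hl hu0 hT _ fun j => ?_).trans_eq ?_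
  · rw [Function.update_apply]
    split_ifs <;> linarith
  · rw [prod_comp_update_const (fun b => T ^ (2 - u + b) / (2 - u + b)), Fintype.card_fin, hpow,
      add_zero, show 2 - u + -1 = 1 - u by ring, div_pow (T ^ (1 - u))]
    field_simp
end
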